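/- Strict separation of interpolants: if 0 < γ₁ < γ₂ < γ₃ and (a, b), (a', b') are the PPF interpolation parameters on [γ₁,γ₂] and [γ₂,γ₃] respectively, then b' < b. -/

import Mathlib

/-!
Substituting `γ = e^s`, `log (log₂ (1 + γ)) = G s - log (log 2)` with `G s = log (log (1 + e^s))`,
so `b` is a secant slope of `G` and it suffices that `G` is strictly concave. Its derivative is the
reciprocal of `(1 + t) log (1 + t) / t` at `t = e^s`, which is the slope of the strictly convex
function `x log x` between `1` and `1 + t`, hence strictly increasing in `t`.
-/

open Real Set

noncomputable def logLogOnePlusExp (s : ℝ) : ℝ := log (log (1 + exp s))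

lemma strictMonoOn_one_add_mul_log_one_add_div :
    StrictMonoOn (fun t : ℝ => (1 + t) * log (1 + t) / t) (Ioi 0) := by
  rintro t (ht : 0 < t) u (hu : 0 < u) htu
  have hslope := strictConvexOn_mul_log.secant_strict_mono (a := 1) (x := 1 + t) (y := 1 + u)
    (by norm_num) (mem_Ici.mpr (by linarith)) (mem_Ici.mpr (by linarith))
    (by linarith) (by linarith) (by linarith)
  simpa only [log_one, mul_zero, sub_zero, add_sub_cancel_left] using hslope

lemma hasDerivAt_logLogOnePlusExp (s : ℝ) :
    HasDerivAt logLogOnePlusExp ((1 + exp s) * log (1 + exp s) / exp s)⁻¹ s := by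
  have hpos : 0 < 1 + exp s := by positivity
  have hlog : 0 < log (1 + exp s) := log_pos (by linarith [exp_pos s])
  have hderiv := (((hasDerivAt_exp s).const_add 1).log hpos.ne').log hlog.ne'
  refine hderiv.congr_deriv ?_
  field_simp

lemma strictConcaveOn_logLogOnePlusExp : StrictConcaveOn ℝ univ logLogOnePlusExp := by
  refine StrictAnti.strictConcaveOn_univ_of_deriv
    (continuous_iff_continuousAt.2 fun s => (hasDerivAt_logLogOnePlusExp s).continuousAt) ?_
  intro s r hsr
  simp only [(hasDerivAt_logLogOnePlusExp _).deriv]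
  have hs : exp s ∈ Ioi (0 : ℝ) := exp_pos s
  have hr : exp r ∈ Ioi (0 : ℝ) := exp_pos r
  have hpos : 0 < (1 + exp s) * log (1 + exp s) / exp s := by
    have : 0 < log (1 + exp s) := log_pos (by linarith [exp_pos s])
    positivity
  exact inv_strictAnti₀ hpos
    (strictMonoOn_one_add_mul_log_one_add_div hs hr (exp_lt_exp.mpr hsr))

lemma log_logb_two_one_add (γ : ℝ) (hγ : 0 < γ) :
    log (logb 2 (1 + γ)) = logLogOnePlusExp (log γ) - log (log 2) := by
  rw [logLogOnePlusExp, exp_log hγ, logb,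
    log_div (log_pos (by linarith)).ne' (log_pos one_lt_two).ne']

theorem stmt_18 (γ₁ γ₂ γ₃ : ℝ) (h1 : 0 < γ₁) (h12 : γ₁ < γ₂) (h23 : γ₂ < γ₃)
    (b : ℝ → ℝ → ℝ)
    (hb : ∀ α β : ℝ, b α β =
      (Real.log (Real.logb 2 (1 + β)) - Real.log (Real.logb 2 (1 + α))) /
        (Real.log β - Real.log α)) :
    b γ₂ γ₃ < b γ₁ γ₂ := by
  have h2 : 0 < γ₂ := h1.trans h12
  have h3 : 0 < γ₃ := h2.trans h23
  have hslope := strictConcaveOn_logLogOnePlusExp.slope_anti_adjacent (mem_univ _) (mem_univ _)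
    (log_lt_log h1 h12) (log_lt_log h2 h23)
  rw [hb, hb, log_logb_two_one_add γ₁ h1, log_logb_two_one_add γ₂ h2,
    log_logb_two_one_add γ₃ h3]
  simpa only [sub_sub_sub_cancel_right] using hslope
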